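/- Assume (A.1)-(A.3) and that M is irreducible. If ν ≠ 0 is a finite Borel measure on X with L_M* ν = λν for some λ > 0, then the support of ν equals X_M. -/

import Mathlib

open Filter MeasureTheory Topology
open scoped ENNReal NNReal BigOperators

namespace TMS

variable {S : Type*}

/-- prepend a symbol to a one-sided sequence -/
def cons (a : S) (ω : ℕ → S) : ℕ → S
  | 0 => a
  | n + 1 => ω n

/-- the shift transformation -/
def shift (ω : ℕ → S) : ℕ → S := fun n => ω (n + 1)

/-- the (one-sided) topological Markov shift with transition matrix `A` -/
def markovShift (A : S → S → Prop) : Set (ℕ → S) := {ω | ∀ n, A (ω n) (ω (n + 1))}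

/-- the cylinder set of a word of length `n`, inside `X` -/
def cylW (X : Set (ℕ → S)) (n : ℕ) (w : Fin n → S) : Set (ℕ → S) :=
  {ω | ω ∈ X ∧ ∀ i : Fin n, ω i = w i}

/-- the cylinder set of a single symbol, inside `X` -/
def cyl1 (X : Set (ℕ → S)) (s : S) : Set (ℕ → S) := {ω | ω ∈ X ∧ ω 0 = s}

/-- Birkhoff sum `S_n φ` -/
noncomputable def birkhoff (φ : (ℕ → S) → ℝ) (n : ℕ) (ω : ℕ → S) : ℝ :=
  ∑ i ∈ Finset.range n, φ (shift^[i] ω)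

open Classical in
/-- the metric `d_θ` -/
noncomputable def dtheta (θ : ℝ) (ω υ : ℕ → S) : ℝ :=
  if ω = υ then 0 else θ ^ sInf {n | ω n ≠ υ n}

/-- supremum norm over `X` -/
noncomputable def supNorm (X : Set (ℕ → S)) (f : (ℕ → S) → ℝ) : ℝ :=
  sSup ((fun ω => |f ω|) '' X)

/-- `C` is a bound witnessing `[f]_k ≤ C`, i.e. `var_n f ≤ C θ^n` for all `n ≥ k`. -/
def LipBound (X : Set (ℕ → S)) (θ : ℝ) (k : ℕ) (f : (ℕ → S) → ℝ) (C : ℝ) : Prop :=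
  ∀ n, k ≤ n → ∀ ω, ω ∈ X → ∀ υ, υ ∈ X → (∀ i, i < n → ω i = υ i) →
    |f ω - f υ| ≤ C * θ ^ n

/-- the seminorm `[f]_k` -/
noncomputable def lipSemi (X : Set (ℕ → S)) (θ : ℝ) (k : ℕ) (f : (ℕ → S) → ℝ) : ℝ :=
  sInf {C | 0 ≤ C ∧ LipBound X θ k f C}

/-- the norm `‖f‖_k = ‖f‖_∞ + [f]_k` -/
noncomputable def normK (X : Set (ℕ → S)) (θ : ℝ) (k : ℕ) (f : (ℕ → S) → ℝ) : ℝ :=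
  supNorm X f + lipSemi X θ k f

/-- `φ` is summable: `Σ_{s : [s] ≠ ∅} exp (sup_{[s]} φ) < ∞` -/
def SummableOn (X : Set (ℕ → S)) (φ : (ℕ → S) → ℝ) : Prop :=
  (∀ s : S, BddAbove (φ '' cyl1 X s)) ∧
    Summable (fun s : {s : S // (cyl1 X s).Nonempty} => Real.exp (sSup (φ '' cyl1 X s.1)))

/-- finite irreducibility of a transition matrix -/
def FinitelyIrreducible (A : S → S → Prop) : Prop :=
  ∃ F : Finset (List S), ∀ a b : S, ∃ w ∈ F, List.Chain' A (a :: (w ++ [b]))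

/-- `X` contains a periodic point of the shift -/
def HasPeriodicPoint (X : Set (ℕ → S)) : Prop :=
  ∃ ω, ω ∈ X ∧ ∃ m, 0 < m ∧ shift^[m] ω = ω

/-- the Ruelle transfer operator `L_M` associated to `M` and the potential `φ` -/
noncomputable def transfer (M : S → S → Prop) (φ : (ℕ → S) → ℝ)
    (f : (ℕ → S) → ℝ) : (ℕ → S) → ℝ :=
  fun ω => ∑' a : {a : S // M a (ω 0)}, Real.exp (φ (cons a ω)) * f (cons a ω)

section Top

variable [TopologicalSpace S]

/-- the cone `Λ^k_c` -/
def cone (X : Set (ℕ → S)) (θ : ℝ) (k : ℕ) (c : ℝ) : Set ((ℕ → S) → ℝ) :=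
  {f | ContinuousOn f X ∧ (∀ ω ∈ X, 0 ≤ f ω) ∧
    ∀ ω ∈ X, ∀ υ ∈ X, (∀ i, i < k → ω i = υ i) →
      f ω ≤ Real.exp (c * dtheta θ ω υ) * f υ}

/-- the space `C_b(X)` of bounded continuous functions -/
def Cb (X : Set (ℕ → S)) : Set ((ℕ → S) → ℝ) :=
  {f | ContinuousOn f X ∧ BddAbove ((fun ω => |f ω|) '' X)}

/-- the space `F^k_b(X)` of bounded weak-Lipschitz functions -/
def Fkb (X : Set (ℕ → S)) (θ : ℝ) (k : ℕ) : Set ((ℕ → S) → ℝ) :=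
  {f | f ∈ Cb X ∧ ∃ C, LipBound X θ k f C}

end Top

/-- operator norm of `L` on the space `F` with norm `N` -/
noncomputable def opNorm (N : ((ℕ → S) → ℝ) → ℝ) (F : Set ((ℕ → S) → ℝ))
    (L : ((ℕ → S) → ℝ) → (ℕ → S) → ℝ) : ℝ :=
  sSup {r | ∃ f ∈ F, N f ≤ 1 ∧ r = N (L f)}

/-- spectral radius of `L` on `(F, N)` via the Gelfand formula -/
noncomputable def specRad (N : ((ℕ → S) → ℝ) → ℝ) (F : Set ((ℕ → S) → ℝ))
    (L : ((ℕ → S) → ℝ) → (ℕ → S) → ℝ) : ℝ :=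
  Filter.limsup (fun n : ℕ => (opNorm N F (L^[n])) ^ ((1 : ℝ) / n)) Filter.atTop

/-- the `n`-th partition function `Σ_{w ∈ Sⁿ, [w] ≠ ∅} exp (sup_{[w]} S_n φ)` -/
noncomputable def partition (X : Set (ℕ → S)) (φ : (ℕ → S) → ℝ) (n : ℕ) : ℝ≥0∞ :=
  ∑' w : {w : Fin n → S // (cylW X n w).Nonempty},
    ENNReal.ofReal (Real.exp (sSup (birkhoff φ n '' cylW X n w.1)))

/-- `P` is the topological pressure of `φ` on `X` -/
def IsPressure (X : Set (ℕ → S)) (φ : (ℕ → S) → ℝ) (P : ℝ) : Prop :=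
  Filter.Tendsto (fun n : ℕ => Real.log (partition X φ n).toReal / (n : ℝ))
    Filter.atTop (nhds P)

/-- there is an `M`-path from `a` to `b` (of length at least one) -/
def reaches (M : S → S → Prop) (a b : S) : Prop :=
  ∃ l : List S, List.Chain M a (l ++ [b])

/-- communication relation `a ↔ b` -/
def comm (M : S → S → Prop) (a b : S) : Prop :=
  a = b ∨ (reaches M a b ∧ reaches M b a)

/-- the submatrix of `M` indexed by `T` -/
def restrictM (M : S → S → Prop) (T : Set S) : S → S → Prop :=
  fun a b => M a b ∧ a ∈ T ∧ b ∈ T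

/-- support of a Borel measure -/
def msupport [TopologicalSpace S] [MeasurableSpace S] (ν : Measure (ℕ → S)) :
    Set (ℕ → S) :=
  {ω | ∀ U : Set (ℕ → S), IsOpen U → ω ∈ U → 0 < ν U}

end TMS

/-!
Testing `L_M* ν = λ ν` against `1 - f` shows that, for `0 ≤ f ∈ C_b(X)`, `L_M f = 0` ν-a.e. if and
only if `f = 0` ν-a.e.; integrability is never assumed, it follows from the integrals involved
being nonzero.
The indicator of `{ω | ¬ M (ω (n + 1)) (ω (n + 2))}` is mapped by `L_M` to a function vanishing off
`{ω | ¬ M (ω n) (ω (n + 1))}`, and that of `{ω | ¬ M (ω 0) (ω 1)}` to zero, so by induction ν is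
carried by `X_M`; this gives `supp ν ⊆ X_M`. Conversely `1_{[ζ₀ … ζₙ]} e^{-φ}` is mapped to
`1_{[ζ₁ … ζₙ]}` when `M ζ₀ ζ₁`, so deleting the first symbol of a null cylinder leaves a null
cylinder. By irreducibility every cylinder `[v₀ … v_k]` of `X_M` arises in this way from a
refinement of any given cylinder of `X_M`; if one of these were null, ν would vanish near every
point, hence `ν = 0`.
-/

open Set PiNat

theorem ae_eq_zero_of_integral_sub_eq {α : Type*} [MeasurableSpace α] {μ : Measure α}
    {u v : α → ℝ} (hv : 0 ≤ v) (hu : ∫ x, u x ∂μ ≠ 0)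
    (h : ∫ x, (u x - v x) ∂μ = ∫ x, u x ∂μ) : v =ᵐ[μ] 0 := by
  have hu' : Integrable u μ := .of_integral_ne_zero hu
  have hv' : Integrable v μ :=
    (hu'.sub (Integrable.of_integral_ne_zero (h ▸ hu))).congr (.of_forall fun x => by simp)
  rw [integral_sub hu' hv', sub_eq_self] at h
  exact (integral_eq_zero_iff_of_nonneg hv hv').1 h

theorem IsClopen.continuousOn_indicator {α β : Type*} [TopologicalSpace α] [TopologicalSpace β]
    [Zero β] {X s : Set α} {f : α → β} (hs : IsClopen s) (hf : ContinuousOn f X) :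
    ContinuousOn (s.indicator f) X := by
  intro x hx
  by_cases hxs : x ∈ s
  · refine (hf x hx).congr_of_eventuallyEq ?_ (indicator_of_mem hxs f)
    filter_upwards [mem_nhdsWithin_of_mem_nhds (hs.isOpen.mem_nhds hxs)] with y hy
    exact indicator_of_mem hy f
  · refine (continuousWithinAt_const (b := 0)).congr_of_eventuallyEq ?_ (indicator_of_notMem hxs f)
    filter_upwards [mem_nhdsWithin_of_mem_nhds (hs.compl.isOpen.mem_nhds hxs)] with y hy
    exact indicator_of_notMem hy f

namespace TMS

variable {S : Type*}

section Symbolic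

variable {M : S → S → Prop}

theorem iterate_shift_succ_cons (r : ℕ) (a : S) (ω : ℕ → S) :
    shift^[r + 1] (cons a ω) = shift^[r] ω :=
  Function.iterate_succ_apply shift r (cons a ω)

theorem cons_mem_markovShift {a : S} {ω : ℕ → S} :
    cons a ω ∈ markovShift M ↔ M a (ω 0) ∧ ω ∈ markovShift M :=
  ⟨fun h => ⟨h 0, fun n => h (n + 1)⟩, fun ⟨h0, h⟩ n => by cases n with
    | zero => exact h0
    | succ n => exact h n⟩

theorem shift_mem_markovShift {ω : ℕ → S} (hω : ω ∈ markovShift M) : shift ω ∈ markovShift M :=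
  fun n => hω (n + 1)

theorem cons_mem_cylinder_succ {a : S} {ω ζ : ℕ → S} {n : ℕ} :
    cons a ω ∈ cylinder ζ (n + 1) ↔ a = ζ 0 ∧ ω ∈ cylinder (shift ζ) n := by
  simp only [mem_cylinder_iff, Nat.forall_lt_succ_left]
  rfl

theorem reaches.exists_iterate_shift_eq {a : S} {v : ℕ → S} (h : reaches M a (v 0))
    (hv : v ∈ markovShift M) :
    ∃ η ∈ markovShift M, η 0 = a ∧ ∃ r, shift^[r] η = v := by
  obtain ⟨l, hl⟩ := h
  induction l generalizing a with
  | nil => exact ⟨cons a v, cons_mem_markovShift.2 ⟨List.isChain_pair.1 hl, hv⟩, rfl, 1, rfl⟩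
  | cons x l ih =>
    rw [List.Chain, List.cons_append, List.isChain_cons_cons] at hl
    obtain ⟨η, hη, rfl, r, hηv⟩ := ih hl.2
    exact ⟨cons a η, cons_mem_markovShift.2 ⟨hl.1, hη⟩, rfl, r + 1, by
      rw [iterate_shift_succ_cons, hηv]⟩

theorem exists_mem_cylinder_iterate_shift_eq {ω η : ℕ → S} (hω : ω ∈ markovShift M)
    (hη : η ∈ markovShift M) (n : ℕ) (h : ω n = η 0) :
    ∃ ξ ∈ markovShift M, ξ ∈ cylinder ω (n + 1) ∧ shift^[n] ξ = η := by
  induction n generalizing ω with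
  | zero => exact ⟨η, hη, mem_cylinder_iff.2 fun i hi => by rw [Nat.lt_one_iff.1 hi, h], rfl⟩
  | succ n ih =>
    obtain ⟨ξ, hξ, hξω, hξη⟩ := ih (shift_mem_markovShift hω) h
    have hξ0 : ξ 0 = ω 1 := mem_cylinder_iff.1 hξω 0 n.succ_pos
    exact ⟨cons (ω 0) ξ, cons_mem_markovShift.2 ⟨hξ0 ▸ hω 0, hξ⟩,
      cons_mem_cylinder_succ.2 ⟨rfl, hξω⟩, by rw [iterate_shift_succ_cons, hξη]⟩

theorem exists_mem_cylinder_iterate_shift_eq_of_reaches {S0 : Set S}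
    (hMS0 : ∀ a b, M a b → a ∈ S0 ∧ b ∈ S0) (hirr : ∀ a ∈ S0, ∀ b ∈ S0, reaches M a b)
    {ω v : ℕ → S} (hω : ω ∈ markovShift M) (hv : v ∈ markovShift M) (n : ℕ) :
    ∃ ξ ∈ markovShift M, ξ ∈ cylinder ω n ∧ ∃ r, shift^[r + n] ξ = v := by
  obtain ⟨η, hη, hη0, r, hηv⟩ :=
    (hirr _ (hMS0 _ _ (hω n)).1 _ (hMS0 _ _ (hv 0)).1).exists_iterate_shift_eq hv
  obtain ⟨ξ, hξ, hξω, hξη⟩ := exists_mem_cylinder_iterate_shift_eq hω hη n hη0.symm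
  exact ⟨ξ, hξ, cylinder_anti ω n.le_succ hξω, r, by rw [Function.iterate_add_apply, hξη, hηv]⟩

end Symbolic

section Topology

variable [TopologicalSpace S]

theorem isClopen_cylinder [DiscreteTopology S] (ζ : ℕ → S) (n : ℕ) : IsClopen (cylinder ζ n) := by
  refine ⟨?_, isOpen_cylinder _ ζ n⟩
  rw [cylinder_eq_pi]
  exact isClosed_set_pi fun _ _ => isClosed_discrete _

theorem isClopen_setOf_not_transition [DiscreteTopology S] (M : S → S → Prop) (n : ℕ) :
    IsClopen {ω : ℕ → S | ¬ M (ω n) (ω (n + 1))} :=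
  (isClopen_discrete {p : S × S | ¬ M p.1 p.2}).preimage
    (show Continuous fun ω : ℕ → S => (ω n, ω (n + 1)) by fun_prop)

theorem indicator_mem_Cb {X s : Set (ℕ → S)} {f : (ℕ → S) → ℝ} {B : ℝ} (hs : IsClopen s)
    (hf : ContinuousOn f X) (hB : ∀ ω ∈ s ∩ X, |f ω| ≤ B) : s.indicator f ∈ Cb X := by
  refine ⟨hs.continuousOn_indicator hf, max B 0, ?_⟩
  rintro _ ⟨ω, hω, rfl⟩
  by_cases hωs : ω ∈ s
  · simpa [indicator_of_mem hωs] using Or.inl (hB ω ⟨hωs, hω⟩)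
  · simp [indicator_of_notMem hωs]

theorem LipBound.continuousOn [DiscreteTopology S] {X : Set (ℕ → S)} {θ C : ℝ} {m : ℕ}
    {f : (ℕ → S) → ℝ} (hf : LipBound X θ m f C) (hθ0 : 0 ≤ θ) (hθ1 : θ < 1) : ContinuousOn f X := by
  intro ω hω
  rw [ContinuousWithinAt, Metric.tendsto_nhds]
  intro ε hε
  have hsmall : Tendsto (fun n => C * θ ^ n) atTop (𝓝 0) := by
    simpa using (tendsto_pow_atTop_nhds_zero_of_lt_one hθ0 hθ1).const_mul C
  obtain ⟨n, hnε, hmn⟩ :=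
    ((hsmall.eventually (gt_mem_nhds hε)).and (eventually_ge_atTop m)).exists
  filter_upwards [nhdsWithin_le_nhds ((isOpen_cylinder _ ω n).mem_nhds (self_mem_cylinder ω n)),
    self_mem_nhdsWithin] with υ hυ hυX
  rw [Real.dist_eq]
  exact (hf n hmn υ hυX ω hω (mem_cylinder_iff.1 hυ)).trans_lt hnε

end Topology

section Transfer

variable {A M : S → S → Prop} {φ f : (ℕ → S) → ℝ} {ω : ℕ → S}

theorem summable_exp_cons (hMA : ∀ a b, M a b → A a b) (hφ : SummableOn (markovShift A) φ)
    (hω : ω ∈ markovShift A) :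
    Summable fun a : {a : S // M a (ω 0)} => Real.exp (φ (cons a ω)) := by
  obtain ⟨hbdd, hsum⟩ := hφ
  have hcons (a : {a : S // M a (ω 0)}) : cons a.1 ω ∈ cyl1 (markovShift A) a.1 :=
    ⟨cons_mem_markovShift.2 ⟨hMA _ _ a.2, hω⟩, rfl⟩
  let i (a : {a : S // M a (ω 0)}) : {s : S // (cyl1 (markovShift A) s).Nonempty} :=
    ⟨a.1, _, hcons a⟩
  have hi : Function.Injective i := fun a b h => Subtype.ext (congrArg (fun s => s.1) h)
  exact (hsum.comp_injective hi).of_nonneg_of_le (fun _ => (Real.exp_pos _).le)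
    fun a => Real.exp_le_exp.2 (le_csSup (hbdd a.1) ⟨_, hcons a, rfl⟩)

theorem transfer_nonneg (hf : 0 ≤ f) : 0 ≤ transfer M φ f :=
  fun _ => tsum_nonneg fun _ => mul_nonneg (Real.exp_pos _).le (hf _)

theorem transfer_eq_zero_of_forall (h : ∀ a, M a (ω 0) → f (cons a ω) = 0) :
    transfer M φ f ω = 0 :=
  (tsum_congr fun a => by rw [h a.1 a.2, mul_zero]).trans tsum_zero

theorem transfer_one_sub [TopologicalSpace S] (hMA : ∀ a b, M a b → A a b)
    (hφ : SummableOn (markovShift A) φ) (hω : ω ∈ markovShift A) (hf : f ∈ Cb (markovShift A)) :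
    transfer M φ (1 - f) ω = transfer M φ 1 ω - transfer M φ f ω := by
  obtain ⟨B, hB⟩ := hf.2
  have hw := summable_exp_cons hMA hφ hω
  have hwf : Summable fun a : {a : S // M a (ω 0)} => Real.exp (φ (cons a ω)) * f (cons a ω) :=
    (hw.mul_right B).of_norm_bounded fun a => by
      rw [norm_mul, Real.norm_eq_abs, Real.norm_eq_abs, abs_of_pos (Real.exp_pos _)]
      exact mul_le_mul_of_nonneg_left
        (hB ⟨_, cons_mem_markovShift.2 ⟨hMA _ _ a.2, hω⟩, rfl⟩) (Real.exp_pos _).le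
  simp only [transfer, Pi.sub_apply, Pi.one_apply, mul_sub, mul_one]
  exact hw.tsum_sub hwf

end Transfer

section Eigenmeasure

variable [TopologicalSpace S] [MeasurableSpace S]

def IsEigenmeasure (X : Set (ℕ → S)) (M : S → S → Prop) (φ : (ℕ → S) → ℝ)
    (ν : Measure (ℕ → S)) (lam : ℝ) : Prop :=
  ∀ f ∈ Cb X, ∫ ω, transfer M φ f ω ∂ν = lam * ∫ ω, f ω ∂ν

variable {A M : S → S → Prop} {φ f : (ℕ → S) → ℝ} {ν : Measure (ℕ → S)} {lam : ℝ}

omit [MeasurableSpace S] in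
theorem one_mem_Cb {X : Set (ℕ → S)} : (1 : (ℕ → S) → ℝ) ∈ Cb X :=
  ⟨continuousOn_const, 1, by rintro _ ⟨ω, -, rfl⟩; simp⟩

omit [MeasurableSpace S] in
theorem one_sub_mem_Cb {X : Set (ℕ → S)} (hf : f ∈ Cb X) : 1 - f ∈ Cb X := by
  obtain ⟨B, hB⟩ := hf.2
  refine ⟨continuousOn_const.sub hf.1, 1 + B, ?_⟩
  rintro _ ⟨ω, hω, rfl⟩
  exact (abs_sub _ _).trans (by simpa using hB ⟨ω, hω, rfl⟩)

theorem integral_transfer_one_sub_transfer (hMA : ∀ a b, M a b → A a b)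
    (hφ : SummableOn (markovShift A) φ) (hνX : ν (markovShift A)ᶜ = 0)
    (heig : IsEigenmeasure (markovShift A) M φ ν lam) (hf : f ∈ Cb (markovShift A)) :
    ∫ ω, (transfer M φ 1 ω - transfer M φ f ω) ∂ν = lam * ∫ ω, (1 - f ω) ∂ν := by
  refine (integral_congr_ae ?_).trans (heig _ (one_sub_mem_Cb hf))
  filter_upwards [mem_ae_iff.2 hνX] with ω hω
  exact (transfer_one_sub hMA hφ hω hf).symm

variable [IsFiniteMeasure ν]

theorem ae_eq_zero_of_transfer_ae_eq_zero (hMA : ∀ a b, M a b → A a b)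
    (hφ : SummableOn (markovShift A) φ) (hνX : ν (markovShift A)ᶜ = 0)
    (heig : IsEigenmeasure (markovShift A) M φ ν lam) (hlam : lam ≠ 0) (hf0 : 0 ≤ f)
    (hf : f ∈ Cb (markovShift A)) (hLf : transfer M φ f =ᵐ[ν] 0) : f =ᵐ[ν] 0 := by
  rcases eq_or_ne ν 0 with rfl | hν0
  · simp [EventuallyEq]
  have : NeZero ν := ⟨hν0⟩
  refine ae_eq_zero_of_integral_sub_eq (u := fun _ => 1) hf0 (by simp [measureReal_univ_ne_zero])
    (mul_left_cancel₀ hlam ?_)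
  rw [← integral_transfer_one_sub_transfer hMA hφ hνX heig hf]
  refine (integral_congr_ae ?_).trans (heig 1 one_mem_Cb)
  filter_upwards [hLf] with ω hω
  simp [hω]

theorem transfer_ae_eq_zero_of_ae_eq_zero (hMA : ∀ a b, M a b → A a b)
    (hφ : SummableOn (markovShift A) φ) (hνX : ν (markovShift A)ᶜ = 0)
    (heig : IsEigenmeasure (markovShift A) M φ ν lam) (hlam : lam ≠ 0) (hf0 : 0 ≤ f)
    (hf : f ∈ Cb (markovShift A)) (hfν : f =ᵐ[ν] 0) : transfer M φ f =ᵐ[ν] 0 := by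
  rcases eq_or_ne ν 0 with rfl | hν0
  · simp [EventuallyEq]
  have : NeZero ν := ⟨hν0⟩
  have hL1 : ∫ ω, transfer M φ 1 ω ∂ν = lam * ∫ _ω, 1 ∂ν := heig 1 one_mem_Cb
  refine ae_eq_zero_of_integral_sub_eq (u := transfer M φ 1) (transfer_nonneg hf0)
    (by simp [hL1, hlam, measureReal_univ_ne_zero]) ?_
  rw [integral_transfer_one_sub_transfer hMA hφ hνX heig hf, hL1]
  congr 1
  refine integral_congr_ae ?_
  filter_upwards [hfν] with ω hω
  simp [hω]

theorem measure_setOf_not_transition_eq_zero [DiscreteTopology S]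
    (hMA : ∀ a b, M a b → A a b) (hφ : SummableOn (markovShift A) φ)
    (hνX : ν (markovShift A)ᶜ = 0) (heig : IsEigenmeasure (markovShift A) M φ ν lam)
    (hlam : lam ≠ 0) (n : ℕ) : ν {ω | ¬ M (ω n) (ω (n + 1))} = 0 := by
  have key (n : ℕ) (h : transfer M φ ({ω | ¬ M (ω n) (ω (n + 1))}.indicator 1) =ᵐ[ν] 0) :
      ν {ω | ¬ M (ω n) (ω (n + 1))} = 0 := by
    have hind := ae_eq_zero_of_transfer_ae_eq_zero hMA hφ hνX heig hlam
      (indicator_nonneg fun _ _ => zero_le_one)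
      (indicator_mem_Cb (B := 1) (isClopen_setOf_not_transition M n) continuousOn_const
        fun _ _ => by simp) h
    simpa [EventuallyEq, ae_iff] using hind
  induction n with
  | zero =>
    exact key 0 (.of_forall fun ω =>
      transfer_eq_zero_of_forall fun a ha => indicator_of_notMem (not_not.2 ha) _)
  | succ n ih =>
    refine key (n + 1) ?_
    filter_upwards [measure_eq_zero_iff_ae_notMem.1 ih] with ω hω
    exact transfer_eq_zero_of_forall fun a _ => indicator_of_notMem hω _

theorem measure_cylinder_shift_eq_zero [DiscreteTopology S]
    (hMA : ∀ a b, M a b → A a b) (hφ : SummableOn (markovShift A) φ)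
    (hνX : ν (markovShift A)ᶜ = 0) (heig : IsEigenmeasure (markovShift A) M φ ν lam)
    (hlam : lam ≠ 0) {θ C : ℝ} {m : ℕ} (hθ0 : 0 ≤ θ) (hθ1 : θ < 1)
    (hlip : LipBound (markovShift A) θ m φ C) {ζ : ℕ → S} (hζ : ζ ∈ markovShift A)
    (hζM : M (ζ 0) (ζ 1)) {n : ℕ} (hmn : m ≤ n + 1) (hn : 0 < n)
    (h : ν (cylinder ζ (n + 1)) = 0) : ν (cylinder (shift ζ) n) = 0 := by
  set f := (cylinder ζ (n + 1)).indicator fun ω => Real.exp (-φ ω) with hf_def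
  have hf : f ∈ Cb (markovShift A) := by
    refine indicator_mem_Cb (B := Real.exp (C * θ ^ (n + 1) - φ ζ)) (isClopen_cylinder ζ (n + 1))
      (hlip.continuousOn hθ0 hθ1).neg.rexp ?_
    rintro ω ⟨hωζ, hω⟩
    rw [abs_of_pos (Real.exp_pos _), Real.exp_le_exp]
    linarith [(abs_le.1 (hlip (n + 1) hmn ω hω ζ hζ (mem_cylinder_iff.1 hωζ))).1]
  have hfν : f =ᵐ[ν] 0 :=
    measure_mono_null (fun ω hω => by_contra fun hωζ => hω (indicator_of_notMem hωζ _)) h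
  have hLf := transfer_ae_eq_zero_of_ae_eq_zero hMA hφ hνX heig hlam
    (indicator_nonneg fun _ _ => (Real.exp_pos _).le) hf hfν
  refine measure_mono_null (fun ω hω => ?_) (ae_iff.1 hLf)
  -- only the preimage `cons (ζ 0) ω` lies in the cylinder, and it contributes `e^φ e^{-φ} = 1`
  have hM : M (ζ 0) (ω 0) := (mem_cylinder_iff.1 hω 0 hn).symm ▸ hζM
  have hterm (a : {a : S // M a (ω 0)}) (ha : a ≠ ⟨ζ 0, hM⟩) :
      Real.exp (φ (cons a ω)) * f (cons a ω) = 0 := by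
    rw [hf_def, indicator_of_notMem, mul_zero]
    exact fun haζ => ha (Subtype.ext (cons_mem_cylinder_succ.1 haζ).1)
  change transfer M φ f ω ≠ 0
  rw [transfer, tsum_eq_single _ hterm, hf_def,
    indicator_of_mem (cons_mem_cylinder_succ.2 ⟨rfl, hω⟩), ← Real.exp_add, add_neg_cancel,
    Real.exp_zero]
  exact one_ne_zero

theorem measure_cylinder_iterate_shift_eq_zero [DiscreteTopology S]
    (hMA : ∀ a b, M a b → A a b) (hφ : SummableOn (markovShift A) φ)
    (hνX : ν (markovShift A)ᶜ = 0) (heig : IsEigenmeasure (markovShift A) M φ ν lam)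
    (hlam : lam ≠ 0) {θ C : ℝ} {m : ℕ} (hθ0 : 0 ≤ θ) (hθ1 : θ < 1)
    (hlip : LipBound (markovShift A) θ m φ C) {n : ℕ} (hmn : m ≤ n + 1) (hn : 0 < n) :
    ∀ (r : ℕ) {ζ : ℕ → S}, ζ ∈ markovShift M → ν (cylinder ζ (r + n)) = 0 →
      ν (cylinder (shift^[r] ζ) n) = 0
  | 0, _, _, h => by simpa using h
  | r + 1, ζ, hζ, h => by
    rw [Function.iterate_succ_apply]
    refine measure_cylinder_iterate_shift_eq_zero hMA hφ hνX heig hlam hθ0 hθ1 hlip hmn hn r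
      (shift_mem_markovShift hζ) (measure_cylinder_shift_eq_zero hMA hφ hνX heig hlam hθ0 hθ1
        hlip (fun i => hMA _ _ (hζ i)) (hζ 0) (by omega) (by omega) ?_)
    rwa [Nat.add_right_comm] at h

theorem measure_cylinder_pos [DiscreteTopology S] [Countable S] {S0 : Set S}
    (hMS0 : ∀ a b, M a b → a ∈ S0 ∧ b ∈ S0) (hirr : ∀ a ∈ S0, ∀ b ∈ S0, reaches M a b)
    (hMA : ∀ a b, M a b → A a b) (hφ : SummableOn (markovShift A) φ) (hν0 : ν ≠ 0)
    (hνX : ν (markovShift A)ᶜ = 0) (heig : IsEigenmeasure (markovShift A) M φ ν lam)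
    (hlam : lam ≠ 0) {θ C : ℝ} {m : ℕ} (hθ0 : 0 ≤ θ) (hθ1 : θ < 1)
    (hlip : LipBound (markovShift A) θ (m + 1) φ C) {ω : ℕ → S} (hω : ω ∈ markovShift M)
    (n : ℕ) : 0 < ν (cylinder ω n) := by
  refine pos_iff_ne_zero.2 fun hωn => hν0 (Measure.measure_univ_eq_zero.1 ?_)
  refine measure_null_of_locally_null _ fun v _ => ?_
  by_cases hv : v ∈ markovShift M
  · obtain ⟨ξ, hξ, hξω, r, hξv⟩ := exists_mem_cylinder_iterate_shift_eq_of_reaches hMS0 hirr hω hv n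
    refine ⟨cylinder v (m + 1), mem_nhdsWithin_of_mem_nhds
      ((isOpen_cylinder _ v _).mem_nhds (self_mem_cylinder v _)), ?_⟩
    rw [← hξv]
    refine measure_cylinder_iterate_shift_eq_zero hMA hφ hνX heig hlam hθ0 hθ1 hlip
      (Nat.le_succ _) m.succ_pos (r + n) hξ (measure_mono_null ?_ hωn)
    rw [← mem_cylinder_iff_eq.1 hξω]
    exact cylinder_anti ξ (by omega)
  · obtain ⟨j, hj⟩ := not_forall.1 hv
    exact ⟨_, mem_nhdsWithin_of_mem_nhds ((isClopen_setOf_not_transition M j).isOpen.mem_nhds hj),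
      measure_setOf_not_transition_eq_zero hMA hφ hνX heig hlam j⟩

end Eigenmeasure

end TMS

theorem stmt9_general {S : Type*} [Countable S] [TopologicalSpace S] [DiscreteTopology S]
    [MeasurableSpace S]
    (A M : S → S → Prop) (S0 : Set S) (hMS0 : ∀ a b, M a b → a ∈ S0 ∧ b ∈ S0)
    (hMA : ∀ a b, M a b → A a b)
    (hirr : ∀ a ∈ S0, ∀ b ∈ S0, TMS.reaches M a b)
    (θ : ℝ) (hθ0 : 0 < θ) (hθ1 : θ < 1) (k : ℕ)
    (φ : (ℕ → S) → ℝ) (hφ : TMS.SummableOn (TMS.markovShift A) φ)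
    (hφlip : ∃ C, TMS.LipBound (TMS.markovShift A) θ (k + 1) φ C)
    (ν : Measure (ℕ → S)) [IsFiniteMeasure ν] (hν0 : ν ≠ 0)
    (hνX : ν (TMS.markovShift A)ᶜ = 0)
    (lam : ℝ) (hlam : 0 < lam)
    (heig : ∀ f ∈ TMS.Cb (TMS.markovShift A),
      ∫ ω, TMS.transfer M φ f ω ∂ν = lam * ∫ ω, f ω ∂ν) :
    TMS.msupport ν = TMS.markovShift M := by
  obtain ⟨C, hlip⟩ := hφlip
  apply Subset.antisymm
  · intro ω hω
    by_contra hωM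
    obtain ⟨j, hj⟩ := not_forall.1 hωM
    exact (hω _ (TMS.isClopen_setOf_not_transition M j).isOpen hj).ne'
      (TMS.measure_setOf_not_transition_eq_zero hMA hφ hνX heig hlam.ne' j)
  · intro ω hω U hU hωU
    obtain ⟨_, ⟨x, n, rfl⟩, hωx, hxU⟩ :=
      (isTopologicalBasis_cylinders _).exists_subset_of_mem_open hωU hU
    rw [← mem_cylinder_iff_eq.1 hωx] at hxU
    refine lt_of_lt_of_le ?_ (measure_mono hxU)
    exact TMS.measure_cylinder_pos hMS0 hirr hMA hφ hν0 hνX heig hlam.ne' hθ0.le hθ1 hlip hω n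

/-- under (A.1)-(A.3) and irreducibility of `M`, any nonzero finite
Borel measure `ν` with `L_M* ν = λν`, `λ > 0`, has support exactly `X_M`. -/
theorem stmt9 {S : Type*} [Countable S] [TopologicalSpace S] [DiscreteTopology S]
    [MeasurableSpace S]
    (A M : S → S → Prop) (S0 : Set S) (hMS0 : ∀ a b, M a b → a ∈ S0 ∧ b ∈ S0)
    (hMA : ∀ a b, M a b → A a b) (hA : TMS.FinitelyIrreducible A)
    (hirr : ∀ a ∈ S0, ∀ b ∈ S0, TMS.reaches M a b)
    (θ : ℝ) (hθ0 : 0 < θ) (hθ1 : θ < 1) (k : ℕ) (hk : 1 ≤ k)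
    (φ : (ℕ → S) → ℝ) (hφ : TMS.SummableOn (TMS.markovShift A) φ)
    (hφlip : ∃ C, TMS.LipBound (TMS.markovShift A) θ (k + 1) φ C)
    (hper : TMS.HasPeriodicPoint (TMS.markovShift M))
    (ν : Measure (ℕ → S)) [IsFiniteMeasure ν] (hν0 : ν ≠ 0)
    (hνX : ν (TMS.markovShift A)ᶜ = 0)
    (lam : ℝ) (hlam : 0 < lam)
    (heig : ∀ f ∈ TMS.Cb (TMS.markovShift A),
      ∫ ω, TMS.transfer M φ f ω ∂ν = lam * ∫ ω, f ω ∂ν) :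
    TMS.msupport ν = TMS.markovShift M :=
  stmt9_general A M S0 hMS0 hMA hirr θ hθ0 hθ1 k φ hφ hφlip ν hν0 hνX lam hlam heig
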